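/- Sharpness of the ensemble decomposes via Jensen: the ensemble sharpness gap satisfies sup_{‖θ'_ens−θ_ens‖≤ρ} L_S(θ'_ens) − L_S(θ_ens) ≤ (1/m)∑_i sup_{‖θ_i'−θ_i‖≤ρ} L_S(θ_i') − L_S(θ_ens), assuming ℓ(·,y) is convex for every y. -/

import Mathlib

/-!
Fix a perturbation `θ'` of the ensemble within distance `ρ`. Each member `θ' i` then lies within
`ρ` of `θ i`, and by Jensen's inequality for the convex loss the empirical loss of the averaged
prediction is at most the average of the members' empirical losses. Bounding each member's loss by
its own worst case over the ball and taking the supremum over `θ'` gives the claim.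
-/

open Finset

section

variable {N : ℕ} {X Y E : Type*}

noncomputable def empiricalLoss (ℓ : E → Y → ℝ) (xs : Fin N → X) (ys : Fin N → Y) (h : X → E) : ℝ :=
  (1 / (N : ℝ)) * ∑ j, ℓ (h (xs j)) (ys j)

theorem bddAbove_range_empiricalLoss {ℓ : E → Y → ℝ} {C : ℝ} (hbdd : ∀ π y, ℓ π y ≤ C)
    (xs : Fin N → X) (ys : Fin N → Y) : BddAbove (Set.range (empiricalLoss ℓ xs ys)) := by
  refine ⟨(1 / (N : ℝ)) * ∑ _j : Fin N, C, ?_⟩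
  rintro _ ⟨h, rfl⟩
  unfold empiricalLoss
  gcongr with j
  exact hbdd _ _

theorem empiricalLoss_average_le [AddCommGroup E] [Module ℝ E] {ι : Type*} [Fintype ι]
    [Nonempty ι] {ℓ : E → Y → ℝ} (hconv : ∀ y, ConvexOn ℝ Set.univ (fun π => ℓ π y))
    (xs : Fin N → X) (ys : Fin N → Y) (g : ι → X → E) :
    empiricalLoss ℓ xs ys (fun x => (1 / (Fintype.card ι : ℝ)) • ∑ i, g i x)
      ≤ (1 / (Fintype.card ι : ℝ)) * ∑ i, empiricalLoss ℓ xs ys (g i) := by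
  have jensen : ∀ j, ℓ ((1 / (Fintype.card ι : ℝ)) • ∑ i, g i (xs j)) (ys j)
      ≤ ∑ i, (1 / (Fintype.card ι : ℝ)) * ℓ (g i (xs j)) (ys j) := by
    intro j
    simpa [smul_sum] using (hconv (ys j)).map_sum_le (t := univ)
      (w := fun _ => 1 / (Fintype.card ι : ℝ)) (p := fun i => g i (xs j))
      (fun _ _ => by positivity) (by simp) (fun _ _ => Set.mem_univ _)
  calc empiricalLoss ℓ xs ys (fun x => (1 / (Fintype.card ι : ℝ)) • ∑ i, g i x)
      ≤ (1 / (N : ℝ)) * ∑ j, ∑ i, (1 / (Fintype.card ι : ℝ)) * ℓ (g i (xs j)) (ys j) := by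
        unfold empiricalLoss
        gcongr with j
        exact jensen j
    _ = (1 / (Fintype.card ι : ℝ)) * ∑ i, empiricalLoss ℓ xs ys (g i) := by
        simp only [empiricalLoss, mul_sum]
        rw [sum_comm]
        exact sum_congr rfl fun _ _ => sum_congr rfl fun _ _ => by ring

end

theorem ensemble_sharpness_gap_decomposes_general
    {M m N : ℕ} [NeZero m] {X Y : Type*} {d : Fin m → ℕ}
    (f : ∀ i : Fin m, EuclideanSpace ℝ (Fin (d i)) → X → (Fin M → ℝ))
    (xs : Fin N → X) (ys : Fin N → Y)
    (ℓ : (Fin M → ℝ) → Y → ℝ)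
    (hconv : ∀ y : Y, ConvexOn ℝ Set.univ (fun π => ℓ π y))
    (C : ℝ) (hbdd : ∀ π y, ℓ π y ≤ C)
    (θ : PiLp 2 (fun i : Fin m => EuclideanSpace ℝ (Fin (d i))))
    (ρ : ℝ) (hρ : 0 < ρ) :
    sSup ((fun θ' : PiLp 2 (fun i : Fin m => EuclideanSpace ℝ (Fin (d i))) =>
        (1 / (N : ℝ)) * ∑ j : Fin N,
          ℓ ((1 / (m : ℝ)) • ∑ i : Fin m, f i (θ' i) (xs j)) (ys j)) ''
        Metric.closedBall θ ρ)
      - (1 / (N : ℝ)) * ∑ j : Fin N,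
          ℓ ((1 / (m : ℝ)) • ∑ i : Fin m, f i (θ i) (xs j)) (ys j)
      ≤ (1 / (m : ℝ)) * (∑ i : Fin m,
          sSup ((fun θi' : EuclideanSpace ℝ (Fin (d i)) =>
            (1 / (N : ℝ)) * ∑ j : Fin N, ℓ (f i θi' (xs j)) (ys j)) ''
            Metric.closedBall (θ i) ρ))
        - (1 / (N : ℝ)) * ∑ j : Fin N,
            ℓ ((1 / (m : ℝ)) • ∑ i : Fin m, f i (θ i) (xs j)) (ys j) := by
  refine sub_le_sub_right (csSup_le ((Metric.nonempty_closedBall.2 hρ.le).image _) ?_) _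
  rintro _ ⟨θ', hθ', rfl⟩
  have jensen := empiricalLoss_average_le hconv xs ys fun i => f i (θ' i)
  rw [Fintype.card_fin] at jensen
  refine jensen.trans ?_
  gcongr with i
  have bdd := (bddAbove_range_empiricalLoss hbdd xs ys).mono
    ((Set.image_subset_range _ (Metric.closedBall (θ i) ρ)).trans
      (Set.range_comp_subset_range (f i) (empiricalLoss ℓ xs ys)))
  exact le_csSup bdd ⟨θ' i, (PiLp.dist_apply_le θ' θ i).trans hθ', rfl⟩

theorem ensemble_sharpness_gap_decomposes
    {M m N : ℕ} [NeZero m] [NeZero N] {X Y : Type*} {d : Fin m → ℕ}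
    (f : ∀ i : Fin m, EuclideanSpace ℝ (Fin (d i)) → X → (Fin M → ℝ))
    (xs : Fin N → X) (ys : Fin N → Y)
    (ℓ : (Fin M → ℝ) → Y → ℝ)
    (hconv : ∀ y : Y, ConvexOn ℝ Set.univ (fun π => ℓ π y))
    (C : ℝ) (hbdd : ∀ π y, ℓ π y ≤ C)
    (θ : PiLp 2 (fun i : Fin m => EuclideanSpace ℝ (Fin (d i))))
    (ρ : ℝ) (hρ : 0 < ρ) :
    sSup ((fun θ' : PiLp 2 (fun i : Fin m => EuclideanSpace ℝ (Fin (d i))) =>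
        (1 / (N : ℝ)) * ∑ j : Fin N,
          ℓ ((1 / (m : ℝ)) • ∑ i : Fin m, f i (θ' i) (xs j)) (ys j)) ''
        Metric.closedBall θ ρ)
      - (1 / (N : ℝ)) * ∑ j : Fin N,
          ℓ ((1 / (m : ℝ)) • ∑ i : Fin m, f i (θ i) (xs j)) (ys j)
      ≤ (1 / (m : ℝ)) * (∑ i : Fin m,
          sSup ((fun θi' : EuclideanSpace ℝ (Fin (d i)) =>
            (1 / (N : ℝ)) * ∑ j : Fin N, ℓ (f i θi' (xs j)) (ys j)) ''
            Metric.closedBall (θ i) ρ))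
        - (1 / (N : ℝ)) * ∑ j : Fin N,
            ℓ ((1 / (m : ℝ)) • ∑ i : Fin m, f i (θ i) (xs j)) (ys j) :=
  ensemble_sharpness_gap_decomposes_general f xs ys ℓ hconv C hbdd θ ρ hρ
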